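/- arXiv:2103.07047 — 4 statements merged into one kernel-verified Lean document; each statement's English description precedes it below -/
import Mathlib

section
/- A tournament T on n vertices maximizes the number of induced cyclic triangles among all n-vertex tournaments if and only if every vertex of T has out-degree in the set {(n-2)/2, (n-1)/2, n/2} (interpreted as integers, i.e., out-degree ⌊(n-1)/2⌋ or ⌈(n-1)/2⌉). -/
open Finset
open scoped Classical

section Defs

variable {V : Type*}

/-- A tournament: irreflexive, and exactly one arc between any two distinct vertices. -/
def IsTournament (r : V → V → Prop) : Prop :=
  (∀ v, ¬ r v v) ∧ ∀ u v : V, u ≠ v → (r u v ↔ ¬ r v u)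

/-- Out-degree of a vertex. -/
noncomputable def outDeg [Fintype V] (r : V → V → Prop) (v : V) : ℕ :=
  (Finset.univ.filter (fun w => r v w)).card

/-- `s` induces a cyclic triangle `C₃`. -/
def IsC3 (r : V → V → Prop) (s : Finset V) : Prop :=
  ∃ a b c : V, s = {a, b, c} ∧ r a b ∧ r b c ∧ r c a

/-- `s` induces a transitive triangle `TT₃`. -/
def IsTT3 (r : V → V → Prop) (s : Finset V) : Prop :=
  ∃ a b c : V, a ≠ b ∧ a ≠ c ∧ b ≠ c ∧ s = {a, b, c} ∧ r a b ∧ r a c ∧ r b c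

/-- `s` induces a transitive tournament on 4 vertices `TT₄`. -/
def IsTT4 (r : V → V → Prop) (s : Finset V) : Prop :=
  ∃ a b c d : V, a ≠ b ∧ a ≠ c ∧ a ≠ d ∧ b ≠ c ∧ b ≠ d ∧ c ≠ d ∧
    s = {a, b, c, d} ∧ r a b ∧ r a c ∧ r a d ∧ r b c ∧ r b d ∧ r c d

/-- `s` induces `C₃⁺`: a directed 3-cycle plus a source vertex dominating it. -/
def IsC3plus (r : V → V → Prop) (s : Finset V) : Prop :=
  ∃ v a b c : V, v ≠ a ∧ v ≠ b ∧ v ≠ c ∧ s = {v, a, b, c} ∧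
    r v a ∧ r v b ∧ r v c ∧ r a b ∧ r b c ∧ r c a

/-- `s` induces `C₃⁻`: a directed 3-cycle plus a sink vertex dominated by it. -/
def IsC3minus (r : V → V → Prop) (s : Finset V) : Prop :=
  ∃ v a b c : V, v ≠ a ∧ v ≠ b ∧ v ≠ c ∧ s = {v, a, b, c} ∧
    r a v ∧ r b v ∧ r c v ∧ r a b ∧ r b c ∧ r c a

/-- `s` induces `C₄`, the strongly connected 4-vertex tournament. -/
def IsC4 (r : V → V → Prop) (s : Finset V) : Prop :=
  ∃ a b c d : V, a ≠ b ∧ a ≠ c ∧ a ≠ d ∧ b ≠ c ∧ b ≠ d ∧ c ≠ d ∧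
    s = {a, b, c, d} ∧ r a b ∧ r a c ∧ r d a ∧ r b c ∧ r b d ∧ r c d

/-- Number of `k`-subsets of `A` satisfying `P`. -/
noncomputable def numCopiesIn (P : Finset V → Prop) (A : Finset V) (k : ℕ) : ℕ :=
  ((A.powersetCard k).filter P).card

/-- Number of `k`-subsets of the whole vertex set satisfying `P`. -/
noncomputable def numCopies [Fintype V] (P : Finset V → Prop) (k : ℕ) : ℕ :=
  numCopiesIn P Finset.univ k

end Defs

/-- Membership in the class `𝒞_n` of carousels, up to relabeling of the vertices. -/
def IsCarousel (n : ℕ) (r : Fin n → Fin n → Prop) : Prop :=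
  ∃ e : Fin n ≃ Fin n, ∀ i j : Fin n,
    ((0 < (j : ℤ) - (i : ℤ) ∧ 2 * ((j : ℤ) - (i : ℤ)) < (n : ℤ)) ∨
      (n : ℤ) < 2 * ((i : ℤ) - (j : ℤ))) →
    r (e i) (e j)

/-
Every 3-set of a tournament is either a cyclic triangle or has exactly one vertex dominating the
other two, so the 3-sets that are not cyclic number `∑ v, (d⁺ v).choose 2`. As
`∑ v, d⁺ v = n.choose 2` is fixed, `8 * ∑ v, (d⁺ v).choose 2` is `∑ v, (2 d⁺ v - (n - 1))²` plus a
constant depending only on `n`. Each summand is an odd square when `n` is even and an even one when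
`n` is odd, hence at least `(n + 1) % 2`, with equality exactly when `d⁺ v` is `(n - 1) / 2` or
`n / 2`; the bound is attained by the tournament on `Fin n` in which `i` beats the later vertices of
its own parity and the earlier vertices of the other parity.
-/

lemma Nat.two_mul_cast_choose_two (m : ℕ) : 2 * (m.choose 2 : ℤ) = m * (m - 1) := by
  have h : 2 * (m.choose 2 : ℚ) = m * (m - 1) := by rw [Nat.cast_choose_two]; ring
  exact_mod_cast h

-- `2 * d - (n - 1)` has the parity of `n + 1`.
lemma mod_two_le_sq_two_mul_sub (d n : ℕ) : ((n + 1) % 2 : ℤ) ≤ (2 * d - (n - 1)) ^ 2 := by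
  rcases eq_or_ne (2 * d - (n - 1) : ℤ) 0 with h | h
  · rw [h]
    omega
  · have h1 := one_le_sq_iff_one_le_abs _ |>.2 (Int.one_le_abs h)
    omega

lemma sq_two_mul_sub_le_mod_two_iff (d n : ℕ) :
    (2 * d - (n - 1) : ℤ) ^ 2 ≤ (n + 1) % 2 ↔ d = (n - 1) / 2 ∨ d = n / 2 := by
  generalize hx : (2 * d - (n - 1) : ℤ) = x
  constructor
  · intro h
    have h1 : |x| ≤ 1 := (sq_le_one_iff_abs_le_one x).1 (h.trans (by omega))
    rw [abs_le] at h1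
    omega
  · intro h
    obtain ⟨rfl, he⟩ | ⟨rfl | rfl, he⟩ :
        x = 0 ∧ (n + 1) % 2 = (0 : ℤ) ∨ (x = 1 ∨ x = -1) ∧ (n + 1) % 2 = (1 : ℤ) := by
      omega
    all_goals rw [he]; norm_num

section Tournament

variable {V : Type*} {r : V → V → Prop}

namespace IsTournament

lemma irrefl (hT : IsTournament r) (v : V) : ¬ r v v := hT.1 v

lemma ne_of_rel (hT : IsTournament r) {u v : V} (h : r u v) : u ≠ v := by
  rintro rfl
  exact hT.irrefl u h

lemma asymm (hT : IsTournament r) {u v : V} (h : r u v) : ¬ r v u :=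
  (hT.2 u v (hT.ne_of_rel h)).1 h

lemma rel_or_rel (hT : IsTournament r) {u v : V} (h : u ≠ v) : r u v ∨ r v u :=
  or_iff_not_imp_right.2 (hT.2 u v h).2

lemma ite_rel_add_ite_rel (hT : IsTournament r) (u v : V) :
    ((if r u v then 1 else 0) + if r v u then 1 else 0 : ℕ) = if u = v then 0 else 1 := by
  by_cases huv : u = v
  · subst huv
    simp [hT.irrefl]
  · rcases hT.rel_or_rel huv with h | h <;> simp [h, hT.asymm h, huv]

end IsTournament

def IsSource (r : V → V → Prop) (v : V) (s : Finset V) : Prop :=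
  v ∈ s ∧ ∀ w ∈ s, w ≠ v → r v w

lemma IsSource.eq (hT : IsTournament r) {u v : V} {s : Finset V} (hu : IsSource r u s)
    (hv : IsSource r v s) : u = v := by
  by_contra h
  exact hT.asymm (hu.2 v hv.1 (Ne.symm h)) (hv.2 u hu.1 h)

lemma IsSource.not_isC3 (hT : IsTournament r) {v : V} {s : Finset V} (hv : IsSource r v s) :
    ¬ IsC3 r s := by
  rintro ⟨a, b, c, rfl, hab, hbc, hca⟩
  obtain ⟨hmem, hdom⟩ := hv
  simp only [mem_insert, mem_singleton] at hmem hdom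
  rcases hmem with rfl | rfl | rfl
  · exact hT.asymm hca (hdom c (by simp) (hT.ne_of_rel hca))
  · exact hT.asymm hab (hdom a (by simp) (hT.ne_of_rel hab))
  · exact hT.asymm hbc (hdom b (by simp) (hT.ne_of_rel hbc))

lemma exists_isSource_of_not_isC3 (hT : IsTournament r) {s : Finset V} (hs : s.card = 3)
    (h : ¬ IsC3 r s) : ∃ v, IsSource r v s := by
  obtain ⟨a, b, c, hab, hac, hbc, rfl⟩ := Finset.card_eq_three.1 hs
  have := hT.2 a b hab
  have := hT.2 a c hac
  have := hT.2 b c hbc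
  simp only [IsSource, IsC3, mem_insert, mem_singleton, forall_eq_or_imp, forall_eq] at h ⊢
  grind [Finset.pair_comm]

variable [Fintype V]

noncomputable def sourceTriples (r : V → V → Prop) (v : V) : Finset (Finset V) :=
  {s ∈ (univ : Finset V).powersetCard 3 | IsSource r v s}

lemma card_sourceTriples (hT : IsTournament r) (v : V) :
    #(sourceTriples r v) = (outDeg r v).choose 2 := by
  have hv : v ∉ univ.filter (r v ·) := by simp [hT.irrefl]
  rw [sourceTriples, outDeg, ← card_powersetCard]
  refine card_nbij' (·.erase v) (insert v) ?_ ?_ ?_ ?_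
  · intro s hs
    rw [mem_coe, mem_filter, mem_powersetCard] at hs
    rw [mem_coe, mem_powersetCard]
    obtain ⟨⟨-, hcard⟩, hmem, hdom⟩ := hs
    refine ⟨fun w hw => ?_, by rw [card_erase_of_mem hmem, hcard]⟩
    obtain ⟨hwv, hws⟩ := mem_erase.1 hw
    simpa using hdom w hws hwv
  · intro p hp
    rw [mem_coe, mem_powersetCard] at hp
    rw [mem_coe, mem_filter, mem_powersetCard]
    obtain ⟨hsub, hcard⟩ := hp
    refine ⟨⟨subset_univ _, by rw [card_insert_of_notMem (fun h => hv (hsub h)), hcard]⟩,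
      mem_insert_self v p, fun w hw hwv => ?_⟩
    simpa using hsub ((mem_insert.1 hw).resolve_left hwv)
  · intro s hs
    exact insert_erase (mem_filter.1 hs).2.1
  · intro p hp
    exact erase_insert (fun h => hv ((mem_powersetCard.1 hp).1 h))

lemma numCopies_isC3_add_sum_choose_two (hT : IsTournament r) :
    numCopies (IsC3 r) 3 + ∑ v, (outDeg r v).choose 2 = (Fintype.card V).choose 3 := by
  have hnot : {s ∈ (univ : Finset V).powersetCard 3 | ¬ IsC3 r s}
      = univ.biUnion (sourceTriples r) := by
    ext s
    simp only [sourceTriples, mem_filter, mem_biUnion, mem_univ, true_and, mem_powersetCard,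
      subset_univ]
    exact ⟨fun ⟨hs, h⟩ => (exists_isSource_of_not_isC3 hT hs h).imp fun v hv => ⟨hs, hv⟩,
      fun ⟨v, hs, hv⟩ => ⟨hs, hv.not_isC3 hT⟩⟩
  have hdisj : ((univ : Finset V) : Set V).PairwiseDisjoint (sourceTriples r) :=
    fun u _ v _ huv => disjoint_filter.2 fun _ _ hu hv => huv (hu.eq hT hv)
  calc numCopies (IsC3 r) 3 + ∑ v, (outDeg r v).choose 2
      = #{s ∈ (univ : Finset V).powersetCard 3 | IsC3 r s}
          + #{s ∈ (univ : Finset V).powersetCard 3 | ¬ IsC3 r s} := by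
        rw [hnot, card_biUnion hdisj]
        simp only [numCopies, numCopiesIn, card_sourceTriples hT]
    _ = (Fintype.card V).choose 3 := by
        rw [card_filter_add_card_filter_not, card_powersetCard, card_univ]

lemma sum_outDeg (hT : IsTournament r) : ∑ v, outDeg r v = (Fintype.card V).choose 2 := by
  have h : 2 * ∑ v, outDeg r v = Fintype.card V * (Fintype.card V - 1) :=
    calc 2 * ∑ v, outDeg r v
        = ∑ v, ∑ w, ((if r v w then 1 else 0) + if r w v then 1 else 0) := by
          simp only [outDeg, card_filter, two_mul, sum_add_distrib]
          rw [sum_comm (f := fun v w => if r w v then 1 else 0)]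
      _ = ∑ v : V, ∑ w, if v = w then 0 else 1 := by simp only [hT.ite_rel_add_ite_rel]
      _ = Fintype.card V * (Fintype.card V - 1) := by simp [sum_ite, filter_ne]
  rw [Nat.choose_two_right]
  omega

noncomputable def imbalance (r : V → V → Prop) (v : V) : ℤ :=
  2 * outDeg r v - (Fintype.card V - 1)

lemma eight_mul_sum_choose_two_outDeg (hT : IsTournament r) :
    8 * ∑ v, ((outDeg r v).choose 2 : ℤ) = ∑ v, imbalance r v ^ 2
      + Fintype.card V * (Fintype.card V - 1) * (Fintype.card V - 3) := by
  set n : ℤ := (Fintype.card V : ℤ)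
  have hsum : 2 * ∑ v, (outDeg r v : ℤ) = n * (n - 1) := by
    rw [← Nat.cast_sum, sum_outDeg hT, Nat.two_mul_cast_choose_two]
  have hv (v : V) : 8 * ((outDeg r v).choose 2 : ℤ)
      = imbalance r v ^ 2 + 4 * (n - 2) * outDeg r v - (n - 1) ^ 2 := by
    rw [imbalance]
    linear_combination 4 * Nat.two_mul_cast_choose_two (outDeg r v)
  calc 8 * ∑ v, ((outDeg r v).choose 2 : ℤ)
      = ∑ v, (imbalance r v ^ 2 + 4 * (n - 2) * outDeg r v - (n - 1) ^ 2) := by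
        rw [mul_sum]
        exact sum_congr rfl fun v _ => hv v
    _ = ∑ v, imbalance r v ^ 2 + 2 * (n - 2) * (2 * ∑ v, (outDeg r v : ℤ))
          - n * (n - 1) ^ 2 := by
        simp only [sum_sub_distrib, sum_add_distrib, ← mul_sum, sum_const, card_univ, nsmul_eq_mul]
        ring
    _ = ∑ v, imbalance r v ^ 2 + n * (n - 1) * (n - 3) := by
        rw [hsum]
        ring

lemma numCopies_isC3_le_iff {r' : V → V → Prop} (hT : IsTournament r) (hT' : IsTournament r') :
    numCopies (IsC3 r') 3 ≤ numCopies (IsC3 r) 3 ↔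
      ∑ v, imbalance r v ^ 2 ≤ ∑ v, imbalance r' v ^ 2 := by
  have h := congrArg (Nat.cast : ℕ → ℤ) (numCopies_isC3_add_sum_choose_two hT)
  have h' := congrArg (Nat.cast : ℕ → ℤ) (numCopies_isC3_add_sum_choose_two hT')
  push_cast at h h'
  have e := eight_mul_sum_choose_two_outDeg hT
  have e' := eight_mul_sum_choose_two_outDeg hT'
  rw [← Nat.cast_le (α := ℤ)]
  constructor <;> intro <;> linarith

def IsAlmostRegular (r : V → V → Prop) : Prop :=
  ∀ v, outDeg r v = (Fintype.card V - 1) / 2 ∨ outDeg r v = Fintype.card V / 2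

lemma sum_mod_two_le_sum_imbalance_sq (r : V → V → Prop) :
    ∑ _v : V, ((Fintype.card V + 1) % 2 : ℤ) ≤ ∑ v, imbalance r v ^ 2 :=
  sum_le_sum fun _ _ => mod_two_le_sq_two_mul_sub _ _

lemma sum_imbalance_sq_le_iff (r : V → V → Prop) :
    ∑ v, imbalance r v ^ 2 ≤ ∑ _v : V, ((Fintype.card V + 1) % 2 : ℤ) ↔ IsAlmostRegular r := by
  refine ⟨fun h v => ?_, fun h => sum_le_sum fun v _ => (sq_two_mul_sub_le_mod_two_iff _ _).2 (h v)⟩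
  have heq := (sum_eq_sum_iff_of_le fun v _ => mod_two_le_sq_two_mul_sub (outDeg r v) _).1
    ((sum_mod_two_le_sum_imbalance_sq r).antisymm h) v (mem_univ v)
  exact (sq_two_mul_sub_le_mod_two_iff _ _).1 heq.ge

end Tournament

def parityRel (i j : ℕ) : Prop := (i < j ∧ (i + j) % 2 = 0) ∨ (j < i ∧ (i + j) % 2 = 1)

lemma card_filter_range_parityRel (i n : ℕ) :
    #{j ∈ range n | parityRel i j} = if i < n then (n - 1 + i % 2) / 2 else (n + i % 2) / 2 := by
  induction n with
  | zero => simp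
  | succ n ih =>
    rw [range_add_one, filter_insert]
    by_cases h : parityRel i n
    · rw [if_pos h, card_insert_of_notMem (by simp), ih]
      unfold parityRel at h
      split_ifs <;> omega
    · rw [if_neg h, ih]
      unfold parityRel at h
      split_ifs <;> omega

def parityTournament (n : ℕ) (i j : Fin n) : Prop := parityRel i j

lemma isTournament_parityTournament (n : ℕ) : IsTournament (parityTournament n) := by
  refine ⟨fun v => by simp [parityTournament, parityRel], fun u v huv => ?_⟩
  rw [Ne, Fin.ext_iff] at huv
  simp only [parityTournament, parityRel]
  omega

lemma isAlmostRegular_parityTournament (n : ℕ) : IsAlmostRegular (parityTournament n) := by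
  intro i
  have h : outDeg (parityTournament n) i = #{j ∈ range n | parityRel i j} := by
    rw [outDeg, card_filter, card_filter]
    exact Fin.sum_univ_eq_sum_range (fun j => if parityRel i j then 1 else 0) n
  rw [Fintype.card_fin, h, card_filter_range_parityRel, if_pos i.isLt]
  omega

theorem stmt3 (n : ℕ) (r : Fin n → Fin n → Prop) (hT : IsTournament r) :
    (∀ r' : Fin n → Fin n → Prop, IsTournament r' →
        numCopies (IsC3 r') 3 ≤ numCopies (IsC3 r) 3) ↔
      (∀ v : Fin n, outDeg r v = (n - 1) / 2 ∨ outDeg r v = n / 2) := by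
  have hreg : IsAlmostRegular r ↔ ∀ v : Fin n, outDeg r v = (n - 1) / 2 ∨ outDeg r v = n / 2 := by
    simp only [IsAlmostRegular, Fintype.card_fin]
  rw [← hreg, ← sum_imbalance_sq_le_iff]
  constructor
  · intro hmax
    have hP := isTournament_parityTournament n
    exact ((numCopies_isC3_le_iff hT hP).1 (hmax _ hP)).trans
      ((sum_imbalance_sq_le_iff _).2 (isAlmostRegular_parityTournament n))
  · intro h r' hT'
    exact (numCopies_isC3_le_iff hT hT').2 (h.trans (sum_mod_two_le_sum_imbalance_sq r'))
end

section
/- For n ≥ 4, every carousel tournament in 𝒞_n contains no induced copy of C₃⁺ and no induced copy of C₃⁻, and every vertex has out-degree ⌊(n-1)/2⌋ or ⌈(n-1)/2⌉. -/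
open Finset
open scoped Classical

/-
Read the carousel order as positions on a circle and measure a vertex `x` by its clockwise
distance `(x - v : Fin n)` from a fixed vertex `v`. Every arc of length `< n/2` is present, so no
arc is longer than `n/2`. Hence the out-neighbours of `v` are the vertices at distance in
`[1, n/2)` and possibly the one at distance `n/2`, which pins down the out-degree. On a set of
vertices whose distances lie in a window shorter than `n/2`, every arc goes from the smaller to
the larger distance, so such a set spans no 3-cycle; the out-neighbours of `v` (distances in
`[1, n/2]`) and its in-neighbours (distances in `[n/2, n - 1]`) both form such windows.
-/

open Function

/-- `IsCarousel n r` unfolds to `∃ e, IsStdCarousel n (r on e)`. -/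
def IsStdCarousel (n : ℕ) (r : Fin n → Fin n → Prop) : Prop :=
  ∀ i j : Fin n,
    ((0 < (j : ℤ) - (i : ℤ) ∧ 2 * ((j : ℤ) - (i : ℤ)) < (n : ℤ)) ∨
      (n : ℤ) < 2 * ((i : ℤ) - (j : ℤ))) →
    r i j

section Relabel

variable {V W : Type*} {r : W → W → Prop}

theorem IsTournament.onFun (hT : IsTournament r) {f : V → W} (hf : Injective f) :
    IsTournament (r on f) :=
  ⟨fun v => hT.1 (f v), fun u v huv => hT.2 (f u) (f v) (hf.ne huv)⟩

theorem IsC3plus.onFun_equiv (e : V ≃ W) {s : Finset W} (h : IsC3plus r s) :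
    IsC3plus (r on e) (s.map e.symm.toEmbedding) := by
  obtain ⟨v, a, b, c, hva, hvb, hvc, rfl, h⟩ := h
  refine ⟨e.symm v, e.symm a, e.symm b, e.symm c, by simpa, by simpa, by simpa, by simp, ?_⟩
  simpa only [onFun, Equiv.apply_symm_apply] using h

theorem IsC3minus.onFun_equiv (e : V ≃ W) {s : Finset W} (h : IsC3minus r s) :
    IsC3minus (r on e) (s.map e.symm.toEmbedding) := by
  obtain ⟨v, a, b, c, hva, hvb, hvc, rfl, h⟩ := h
  refine ⟨e.symm v, e.symm a, e.symm b, e.symm c, by simpa, by simpa, by simpa, by simp, ?_⟩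
  simpa only [onFun, Equiv.apply_symm_apply] using h

theorem outDeg_onFun_equiv [Fintype V] [Fintype W] (e : V ≃ W) (v : V) :
    outDeg (r on e) v = outDeg r (e v) :=
  Finset.card_equiv e (by simp)

end Relabel

namespace Fin

variable {n : ℕ}

theorem val_sub_add_val_sub {x v : Fin n} (h : x ≠ v) :
    (x - v : Fin n).val + (v - x : Fin n).val = n := by
  have hne := val_injective.ne h
  rcases lt_or_gt_of_ne h with hlt | hlt
  · rw [coe_sub_iff_lt.2 hlt, sub_val_of_le hlt.le]; omega
  · rw [sub_val_of_le hlt.le, coe_sub_iff_lt.2 hlt]; omega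

theorem val_sub_sub_val_sub [NeZero n] {a b v : Fin n} (h : (b - v).val ≤ (a - v).val) :
    (a - b : Fin n).val = (a - v : Fin n).val - (b - v : Fin n).val := by
  rw [← sub_sub_sub_cancel_right a b v, sub_val_of_le h]

theorem card_filter_val_sub_le [NeZero n] (v : Fin n) {m : ℕ} (hm : m < n) :
    #{x : Fin n | x ≠ v ∧ (x - v).val ≤ m} = m := by
  rw [Finset.card_nbij' (· - v) (· + v) (t := Ioc 0 ⟨m, hm⟩), card_Ioc]
  · rfl
  · intro x hx
    simp only [mem_coe, mem_filter, mem_univ, true_and, mem_Ioc] at hx ⊢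
    exact ⟨pos_iff_ne_zero.2 (sub_ne_zero.2 hx.1), le_def.2 hx.2⟩
  · intro d hd
    simp only [mem_coe, mem_filter, mem_univ, true_and, mem_Ioc] at hd ⊢
    refine ⟨fun h => (pos_iff_ne_zero.1 hd.1) ?_, ?_⟩
    · simpa using h
    · simpa using le_def.1 hd.2
  · intro x _; simp
  · intro d _; simp

end Fin

section StdCarousel

variable {n : ℕ} {r : Fin n → Fin n → Prop}

theorem IsStdCarousel.rel_of_two_mul_val_sub_lt (hr : IsStdCarousel n r) {v x : Fin n}
    (hxv : x ≠ v) (h : 2 * (x - v : Fin n).val < n) : r v x := by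
  apply hr
  have hne := Fin.val_injective.ne hxv
  rcases le_or_gt v x with hle | hlt
  · rw [Fin.sub_val_of_le hle] at h
    have := Fin.le_def.1 hle
    omega
  · rw [Fin.coe_sub_iff_lt.2 hlt] at h
    have := Fin.lt_def.1 hlt
    omega

theorem IsStdCarousel.two_mul_val_sub_le_of_rel (hr : IsStdCarousel n r) (hT : IsTournament r)
    {v x : Fin n} (hvx : r v x) : 2 * (x - v : Fin n).val ≤ n := by
  have hxv : x ≠ v := by rintro rfl; exact hT.1 x hvx
  by_contra! h
  have := Fin.val_sub_add_val_sub hxv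
  exact (hT.2 v x hxv.symm).1 hvx (hr.rel_of_two_mul_val_sub_lt hxv.symm (by omega))

theorem IsStdCarousel.le_two_mul_val_sub_of_rel (hr : IsStdCarousel n r) (hT : IsTournament r)
    {v x : Fin n} (hxv : r x v) : n ≤ 2 * (x - v : Fin n).val := by
  have hne : x ≠ v := by rintro rfl; exact hT.1 x hxv
  by_contra! h
  exact (hT.2 x v hne).1 hxv (hr.rel_of_two_mul_val_sub_lt hne h)

theorem IsStdCarousel.val_sub_lt_val_sub_of_rel [NeZero n] (hr : IsStdCarousel n r)
    (hT : IsTournament r) (v : Fin n) {a b : Fin n} (hab : r a b)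
    (h : 2 * (a - v : Fin n).val < n + 2 * (b - v : Fin n).val) :
    (a - v : Fin n).val < (b - v : Fin n).val := by
  have hne : a ≠ b := by rintro rfl; exact hT.1 a hab
  by_contra! hle
  have hba := hr.rel_of_two_mul_val_sub_lt hne (by rw [Fin.val_sub_sub_val_sub hle]; omega)
  exact (hT.2 a b hne).1 hab hba

theorem IsStdCarousel.not_cycle_of_window [NeZero n] (hr : IsStdCarousel n r)
    (hT : IsTournament r) (v : Fin n) (lo : ℕ) {a b c : Fin n}
    (hwin : ∀ x ∈ ({a, b, c} : Set (Fin n)),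
      lo ≤ 2 * (x - v : Fin n).val ∧ 2 * (x - v : Fin n).val < lo + n)
    (hab : r a b) (hbc : r b c) : ¬ r c a := by
  intro hca
  obtain ⟨ha, ha'⟩ := hwin a (by simp)
  obtain ⟨hb, hb'⟩ := hwin b (by simp)
  obtain ⟨hc, hc'⟩ := hwin c (by simp)
  have := hr.val_sub_lt_val_sub_of_rel hT v hab (by omega)
  have := hr.val_sub_lt_val_sub_of_rel hT v hbc (by omega)
  have := hr.val_sub_lt_val_sub_of_rel hT v hca (by omega)
  omega

theorem IsStdCarousel.not_isC3plus (hr : IsStdCarousel n r) (hT : IsTournament r)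
    (s : Finset (Fin n)) : ¬ IsC3plus r s := by
  rintro ⟨v, a, b, c, hva, hvb, hvc, -, ha, hb, hc, hab, hbc, hca⟩
  have := NeZero.of_pos v.pos
  have hwin : ∀ x, v ≠ x → r v x →
      2 ≤ 2 * (x - v : Fin n).val ∧ 2 * (x - v : Fin n).val < 2 + n :=
    fun x hvx h => by
      have := Fin.val_ne_zero_iff.2 (sub_ne_zero.2 hvx.symm)
      have := hr.two_mul_val_sub_le_of_rel hT h
      omega
  refine hr.not_cycle_of_window hT v 2 ?_ hab hbc hca
  rintro x (rfl | rfl | rfl)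
  exacts [hwin _ hva ha, hwin _ hvb hb, hwin _ hvc hc]

theorem IsStdCarousel.not_isC3minus (hr : IsStdCarousel n r) (hT : IsTournament r)
    (s : Finset (Fin n)) : ¬ IsC3minus r s := by
  rintro ⟨v, a, b, c, -, -, -, -, ha, hb, hc, hab, hbc, hca⟩
  have := NeZero.of_pos v.pos
  have hwin : ∀ x, r x v → n ≤ 2 * (x - v : Fin n).val ∧ 2 * (x - v : Fin n).val < n + n :=
    fun x h => ⟨hr.le_two_mul_val_sub_of_rel hT h, by omega⟩
  refine hr.not_cycle_of_window hT v n ?_ hab hbc hca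
  rintro x (rfl | rfl | rfl)
  exacts [hwin _ ha, hwin _ hb, hwin _ hc]

theorem IsStdCarousel.outDeg_eq (hr : IsStdCarousel n r) (hT : IsTournament r) (v : Fin n) :
    outDeg r v = (n - 1) / 2 ∨ outDeg r v = n / 2 := by
  have hn := v.pos
  have := NeZero.of_pos hn
  have hlow : #{x | x ≠ v ∧ (x - v).val ≤ (n - 1) / 2} ≤ outDeg r v :=
    card_le_card fun x hx => by
      simp only [mem_filter, mem_univ, true_and] at hx ⊢
      exact hr.rel_of_two_mul_val_sub_lt hx.1 (by omega)
  have hhigh : outDeg r v ≤ #{x | x ≠ v ∧ (x - v).val ≤ n / 2} :=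
    card_le_card fun x hx => by
      simp only [mem_filter, mem_univ, true_and] at hx ⊢
      have := hr.two_mul_val_sub_le_of_rel hT hx
      exact ⟨by rintro rfl; exact hT.1 x hx, by omega⟩
  rw [Fin.card_filter_val_sub_le v (by omega)] at hlow hhigh
  omega

end StdCarousel

theorem stmt11_general (n : ℕ) (r : Fin n → Fin n → Prop) (hT : IsTournament r)
    (hc : IsCarousel n r) :
    (∀ s : Finset (Fin n), ¬ IsC3plus r s) ∧ (∀ s : Finset (Fin n), ¬ IsC3minus r s) ∧
    (∀ v : Fin n, outDeg r v = (n - 1) / 2 ∨ outDeg r v = n / 2) := by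
  obtain ⟨e, he⟩ : ∃ e : Fin n ≃ Fin n, IsStdCarousel n (r on e) := hc
  have hTe := hT.onFun e.injective
  refine ⟨fun s hs => he.not_isC3plus hTe _ (hs.onFun_equiv e),
    fun s hs => he.not_isC3minus hTe _ (hs.onFun_equiv e), fun v => ?_⟩
  simpa only [outDeg_onFun_equiv, Equiv.apply_symm_apply] using he.outDeg_eq hTe (e.symm v)

theorem stmt11 (n : ℕ) (hn : 4 ≤ n) (r : Fin n → Fin n → Prop) (hT : IsTournament r)
    (hc : IsCarousel n r) :
    (∀ s : Finset (Fin n), ¬ IsC3plus r s) ∧ (∀ s : Finset (Fin n), ¬ IsC3minus r s) ∧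
    (∀ v : Fin n, outDeg r v = (n - 1) / 2 ∨ outDeg r v = n / 2) :=
  stmt11_general n r hT hc
end

section
/- The function f(α) = (α(1−α)³ + (1/8)(1−α)⁴)/(1 − α⁴) on the interval (0,1) attains its maximum value (8 − 9·3^{1/3} + 3·9^{1/3})/8 at α = (2·9^{1/3} − 2 − 3^{1/3})/5. -/
open Finset
open scoped Classical

/-!
Write `c = ∛3`, so that `∛9 = c²`, `α₀ = (2c² − 2 − c)/5` and the claimed maximum is
`M = (8 − 9c + 3c²)/8`. The gap `M(1 − x⁴) − (x(1 − x)³ + (1 − x)⁴/8)` is a quartic in `x`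
vanishing at `x = 1` and, doubly, at `x = α₀`; modulo `c³ = 3` it factors as
`A (1 − x)(x − α₀)²(β − x)` with `A = (−1 + 9c − 3c²)/8 > 0` and `β = (13 + 14c + 2c²)/17 > 1`.
Hence the gap is nonnegative for `x ≤ 1`, and zero at `α₀`.
-/

lemma rpow_one_third_pow_three {a : ℝ} (ha : 0 ≤ a) : (a ^ ((1 : ℝ) / 3)) ^ 3 = a := by
  simpa using Real.rpow_inv_natCast_pow ha (n := 3) (by norm_num)

lemma nine_rpow_one_third : (9 : ℝ) ^ ((1 : ℝ) / 3) = ((3 : ℝ) ^ ((1 : ℝ) / 3)) ^ 2 := by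
  rw [Real.rpow_pow_comm (by norm_num)]
  norm_num

section CubeRootOfThree

variable {c : ℝ}

lemma bounds_of_cube_eq_three (hc : c ^ 3 = 3) : 1.442 < c ∧ c < 1.4423 := by
  have hc0 : 0 < c := by
    by_contra! h
    nlinarith [pow_two_nonneg c]
  constructor
  · nlinarith [sq_nonneg (c - 1.442), sq_nonneg (c + 1.442)]
  · nlinarith [sq_nonneg (c - 1.4423), sq_nonneg (c + 1.4423)]

noncomputable def splitPoint (c : ℝ) : ℝ := (2 * c ^ 2 - 2 - c) / 5

noncomputable def maxValue (c : ℝ) : ℝ := (8 - 9 * c + 3 * c ^ 2) / 8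

lemma splitPoint_mem_Ioo (hc : c ^ 3 = 3) : splitPoint c ∈ Set.Ioo 0 1 := by
  obtain ⟨hlo, hhi⟩ := bounds_of_cube_eq_three hc
  have hprod : 0 < (c - 1.442) * (1.4423 - c) := mul_pos (by linarith) (by linarith)
  unfold splitPoint
  constructor <;> nlinarith

lemma maxValue_mul_sub_eq (hc : c ^ 3 = 3) (x : ℝ) :
    maxValue c * (1 - x ^ 4) - (x * (1 - x) ^ 3 + 1 / 8 * (1 - x) ^ 4) =
      (-1 + 9 * c - 3 * c ^ 2) / 8 * (1 - x) * (x - splitPoint c) ^ 2 *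
        ((13 + 14 * c + 2 * c ^ 2) / 17 - x) := by
  unfold maxValue splitPoint
  -- the coefficient is the quotient of (difference of the two sides) by `c³ − 3`
  linear_combination (1 / 8 : ℝ) * ((-1009/425) + (279/85)*c + (-144/425)*c^2 + (-478/425)*c^3
      + (72/425)*c^4 + (24/425)*c^5 + (104/85)*x + (342/425)*x*c + (108/85)*x*c^2
      + (154/425)*x*c^3 + (-72/425)*x*c^4 + (-24/425)*x*c^5 + (-2481/425)*x^2
      + (-567/425)*x^2*c + (-396/425)*x^2*c^2 + (324/425)*x^2*c^3 + (594/85)*x^3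
      + (-234/85)*x^3*c) * hc

lemma numerator_le_maxValue_mul (hc : c ^ 3 = 3) {x : ℝ} (hx : x ≤ 1) :
    x * (1 - x) ^ 3 + 1 / 8 * (1 - x) ^ 4 ≤ maxValue c * (1 - x ^ 4) := by
  obtain ⟨hlo, hhi⟩ := bounds_of_cube_eq_three hc
  have hprod : 0 < (c - 1.442) * (1.4423 - c) := mul_pos (by linarith) (by linarith)
  have hA : 0 ≤ (-1 + 9 * c - 3 * c ^ 2) / 8 := by nlinarith
  have hβ : 0 ≤ (13 + 14 * c + 2 * c ^ 2) / 17 - x := by nlinarith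
  have h1x : 0 ≤ 1 - x := by linarith
  have hfactored : 0 ≤ (-1 + 9 * c - 3 * c ^ 2) / 8 * (1 - x) * (x - splitPoint c) ^ 2 *
      ((13 + 14 * c + 2 * c ^ 2) / 17 - x) := by positivity
  linarith [maxValue_mul_sub_eq hc x]

lemma numerator_splitPoint (hc : c ^ 3 = 3) :
    splitPoint c * (1 - splitPoint c) ^ 3 + 1 / 8 * (1 - splitPoint c) ^ 4 =
      maxValue c * (1 - splitPoint c ^ 4) := by
  linear_combination -maxValue_mul_sub_eq hc (splitPoint c)

end CubeRootOfThree

lemma one_sub_pow_four_pos {x : ℝ} (hx : x ∈ Set.Ioo 0 1) : 0 < 1 - x ^ 4 := by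
  have := pow_lt_one₀ hx.1.le hx.2 (by norm_num : 4 ≠ 0)
  linarith

theorem stmt14 :
    ∀ f : ℝ → ℝ, (∀ α : ℝ, f α = (α * (1 - α) ^ 3 + (1 / 8) * (1 - α) ^ 4) / (1 - α ^ 4)) →
    ∀ α₀ : ℝ, α₀ = (2 * (9 : ℝ) ^ ((1 : ℝ) / 3) - 2 - (3 : ℝ) ^ ((1 : ℝ) / 3)) / 5 →
      α₀ ∈ Set.Ioo (0 : ℝ) 1 ∧
      f α₀ = (8 - 9 * (3 : ℝ) ^ ((1 : ℝ) / 3) + 3 * (9 : ℝ) ^ ((1 : ℝ) / 3)) / 8 ∧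
      ∀ x ∈ Set.Ioo (0 : ℝ) 1, f x ≤ f α₀ := by
  intro f hf α₀ hα₀
  rw [nine_rpow_one_third] at hα₀ ⊢
  set c := (3 : ℝ) ^ ((1 : ℝ) / 3)
  have hc : c ^ 3 = 3 := rpow_one_third_pow_three (by norm_num)
  have hα₀c : α₀ = splitPoint c := hα₀
  have hmem : α₀ ∈ Set.Ioo 0 1 := hα₀c ▸ splitPoint_mem_Ioo hc
  have hval : f α₀ = maxValue c := by
    rw [hf, div_eq_iff (one_sub_pow_four_pos hmem).ne', hα₀c, numerator_splitPoint hc]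
  refine ⟨hmem, hval, fun x hx => ?_⟩
  rw [hval, hf, div_le_iff₀ (one_sub_pow_four_pos hx)]
  exact numerator_le_maxValue_mul hc hx.2.le
end

section
/- For odd k ≥ 5 and n > k: let C_n be the carousel tournament on vertices v₁,...,v_n with v_i → v_j iff (j − i) mod n ∈ {1, ..., (n−1)/2} (n odd). If X ⊆ V(C_n) is a set of k vertices with C_n[X] ≅ C_k, then for every vertex v ∉ X, the induced subtournament C_n[X ∪ {v}] is isomorphic to C_{k+1}. -/
open Finset
open scoped Classical

/-- The carousel relation on `Fin m` for odd `m`: `i → j` iff `(j - i) mod m ∈ {1, …, (m-1)/2}`. -/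
def oddCarousel (m : ℕ) (i j : Fin m) : Prop :=
  ((j : ℕ) + m - (i : ℕ)) % m ∈ Finset.Icc 1 ((m - 1) / 2)

/-- The carousel tournament `C_m`: for odd `m` it is `oddCarousel m`; for even `m` it is
obtained from `C_{m+1}` by deleting the last vertex. -/
def carouselRel (m : ℕ) (i j : Fin m) : Prop :=
  if Odd m then oddCarousel m i j else oddCarousel (m + 1) i.castSucc j.castSucc

/-- The subtournament of `R` induced on `s` is isomorphic to `(Fin m, S)`. -/
def InducedIso {n m : ℕ} (R : Fin n → Fin n → Prop) (s : Finset (Fin n))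
    (S : Fin m → Fin m → Prop) : Prop :=
  ∃ e : {x // x ∈ s} ≃ Fin m, ∀ a b : {x // x ∈ s}, R a.1 b.1 ↔ S (e a) (e b)

/-!
Rotating `C_n`, we may assume that `v` is the middle vertex `h` of `0, …, 2h` (`n = 2h + 1`),
so that `v` beats exactly the vertices above it. List `X ∪ {v}` increasingly. Any set of
vertices of a carousel, listed in cyclic order, spans a *round* tournament: the out-neighbours
of each vertex are the next `d` vertices in the cyclic order, `d` being its out-degree. So the
subtournament is determined by its out-degree sequence. As `C_n[X] ≅ C_k` is regular of degree
`q = (k - 1) / 2`, a vertex of `X` has out-degree `q + 1` if it lies below `v` and `q`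
otherwise. Roundness at the first and at the last vertex forces `v` to sit at position `q` or
`q + 1`; either way the out-degrees are `q + 1` at positions `0, …, q` and `q` above, as in
`C_{k+1} = C_{k+2} - v_{k+2}`.
-/

open Function

lemma Fin.val_sub_eq_ite {n : ℕ} (a b : Fin n) :
    (a - b).val = if b ≤ a then a.val - b.val else n + a.val - b.val := by
  split_ifs with hba
  · exact Fin.coe_sub_iff_le.2 hba
  · exact Fin.coe_sub_iff_lt.2 (not_le.1 hba)

lemma Fin.card_filter_val_mem_Icc {m r : ℕ} [NeZero m] (hr : r < m) :
    #{s : Fin m | s.val ∈ Icc 1 r} = r := by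
  have : ({s : Fin m | s.val ∈ Icc 1 r} : Finset (Fin m)) = Ioc 0 ⟨r, hr⟩ := by
    ext s
    simp only [mem_filter, mem_univ, true_and, mem_Icc, mem_Ioc, Fin.lt_def, Fin.le_def,
      Fin.val_zero]
    omega
  rw [this, Fin.card_Ioc]
  rfl

lemma Fin.card_filter_sub_val_mem_Icc {m r : ℕ} [NeZero m] (i : Fin m) (hr : r < m) :
    #{j : Fin m | (j - i).val ∈ Icc 1 r} = r := by
  refine (card_equiv (Equiv.subRight i) fun j => ?_).trans (Fin.card_filter_val_mem_Icc hr)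
  simp

/-- `(j - i).val ≤ (l - i).val` says that `j` comes no later than `l` on the cycle starting
at `i`; strictly monotone maps preserve this cyclic order. -/
lemma StrictMono.val_sub_le_val_sub {m n : ℕ} {g : Fin m → Fin n} (hg : StrictMono g)
    {i j l : Fin m} (h : (j - i).val ≤ (l - i).val) : (g j - g i).val ≤ (g l - g i).val := by
  have hij := hg.le_iff_le (a := i) (b := j)
  have hil := hg.le_iff_le (a := i) (b := l)
  have hjl := hg.le_iff_le (a := j) (b := l)
  have hgn := (g l).isLt
  simp only [Fin.val_sub_eq_ite, Fin.le_def] at *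
  split_ifs at * <;> omega

lemma Fin.rel_iff_sub_val_mem_Icc_outDeg {m : ℕ} [NeZero m] (S : Fin m → Fin m → Prop)
    (hirr : ∀ i, ¬ S i i)
    (hclosed : ∀ i j l, j ≠ i → (j - i).val ≤ (l - i).val → S i l → S i j)
    (i j : Fin m) :
    S i j ↔ (j - i).val ∈ Icc 1 (outDeg S i) := by
  have hpos : ∀ l, l ≠ i → 1 ≤ (l - i).val := fun l hl =>
    Nat.one_le_iff_ne_zero.2 (Fin.val_ne_zero_iff.2 (sub_ne_zero.2 hl))
  have hlt : ∀ l : Fin m, (l - i).val < m := fun l => (l - i).isLt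
  rw [mem_Icc, outDeg]
  constructor
  · intro hij
    have hji : j ≠ i := fun h => hirr i (h ▸ hij)
    refine ⟨hpos j hji, ?_⟩
    calc (j - i).val = #{l : Fin m | (l - i).val ∈ Icc 1 (j - i).val} :=
          (Fin.card_filter_sub_val_mem_Icc i (hlt j)).symm
      _ ≤ #{l | S i l} := by
          refine card_le_card fun l hl => ?_
          simp only [mem_filter, mem_univ, true_and, mem_Icc] at hl ⊢
          exact hclosed i l j (fun h => by simp [h] at hl) hl.2 hij
  · rintro ⟨hj1, hjd⟩
    by_contra hij
    have hsub : ({l | S i l} : Finset (Fin m)) ⊆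
        ({l | (l - i).val ∈ Icc 1 ((j - i).val - 1)} : Finset (Fin m)) := by
      intro l hl
      simp only [mem_filter, mem_univ, true_and, mem_Icc] at hl ⊢
      refine ⟨hpos l fun h => hirr i (h ▸ hl), ?_⟩
      by_contra hle
      exact hij (hclosed i j l (fun h => by simp [h] at hj1) (by omega) hl)
    have := card_le_card hsub
    rw [Fin.card_filter_sub_val_mem_Icc i (by have := hlt j; omega)] at this
    omega

lemma Finset.card_filter_orderIsoOfFin {α : Type*} [LinearOrder α] (s : Finset α) {k : ℕ}
    (h : #s = k) (P : α → Prop) [DecidablePred P] :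
    #{i | P (s.orderIsoOfFin h i)} = #(s.filter P) := by
  conv_rhs => rw [← map_orderEmbOfFin_univ s h, filter_map, card_map]
  simp only [coe_orderIsoOfFin_apply, Function.comp_apply, RelEmbedding.coe_toEmbedding]
  rfl

lemma inducedIso_map_iff {n m : ℕ} {R : Fin n → Fin n → Prop} {S : Fin m → Fin m → Prop}
    (σ : Fin n ≃ Fin n) (hσ : ∀ a b, R (σ a) (σ b) ↔ R a b) (s : Finset (Fin n)) :
    InducedIso R (s.map σ.toEmbedding) S ↔ InducedIso R s S := by
  let τ : {x // x ∈ s} ≃ {y // y ∈ s.map σ.toEmbedding} := σ.subtypeEquiv (by simp)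
  constructor
  · rintro ⟨e, he⟩
    exact ⟨τ.trans e, fun a b => (hσ a b).symm.trans (he (τ a) (τ b))⟩
  · rintro ⟨e, he⟩
    refine ⟨τ.symm.trans e, fun a b => ?_⟩
    obtain ⟨a, rfl⟩ := τ.surjective a
    obtain ⟨b, rfl⟩ := τ.surjective b
    simpa [τ] using (hσ a b).trans (he a b)

lemma InducedIso.card_filter_eq {n m d : ℕ} {R : Fin n → Fin n → Prop}
    {S : Fin m → Fin m → Prop} {s : Finset (Fin n)} (hs : InducedIso R s S)
    (hS : ∀ i, outDeg S i = d) {x : Fin n} (hx : x ∈ s) : #(s.filter (R x)) = d := by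
  obtain ⟨e, he⟩ := hs
  rw [← hS (e ⟨x, hx⟩), outDeg]
  calc #(s.filter (R x)) = #((univ.filter fun a : {y // y ∈ s} => R x a).map
        (Function.Embedding.subtype _)) := by
        congr 1
        ext y
        simp [and_comm]
    _ = _ := by
        rw [card_map]
        exact card_equiv e fun a => by simp [he ⟨x, hx⟩ a]

lemma oddCarousel_iff {n : ℕ} (i j : Fin n) :
    oddCarousel n i j ↔ (j - i).val ∈ Icc 1 ((n - 1) / 2) := by
  rw [oddCarousel, Fin.val_sub, Nat.add_sub_assoc i.isLt.le, add_comm]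

lemma oddCarousel_add_right_iff {n : ℕ} [NeZero n] (a b c : Fin n) :
    oddCarousel n (a + c) (b + c) ↔ oddCarousel n a b := by
  simp only [oddCarousel_iff, add_sub_add_right_eq_sub]

lemma outDeg_oddCarousel (q : ℕ) (i : Fin (2 * q + 1)) :
    outDeg (oddCarousel (2 * q + 1)) i = q := by
  simp only [outDeg, oddCarousel_iff, show (2 * q + 1 - 1) / 2 = q by omega]
  exact Fin.card_filter_sub_val_mem_Icc i (by omega)

lemma oddCarousel_on_iff {m n : ℕ} [NeZero m] [NeZero n] {g : Fin m → Fin n}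
    (hg : StrictMono g) (i j : Fin m) :
    (oddCarousel n on g) i j ↔ (j - i).val ∈ Icc 1 (outDeg (oddCarousel n on g) i) := by
  refine Fin.rel_iff_sub_val_mem_Icc_outDeg _ (fun i => ?_) (fun i j l hji hle hl => ?_) i j
  · simp [onFun, oddCarousel_iff]
  · rw [onFun, oddCarousel_iff, mem_Icc] at hl ⊢
    have hne : g j - g i ≠ 0 := sub_ne_zero.2 (hg.injective.ne hji)
    exact ⟨Nat.one_le_iff_ne_zero.2 (Fin.val_ne_zero_iff.2 hne),
      (hg.val_sub_le_val_sub hle).trans hl.2⟩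

lemma carouselRel_iff (q : ℕ) (i j : Fin (2 * q + 1 + 1)) :
    carouselRel (2 * q + 1 + 1) i j ↔
      (j - i).val ∈ Icc 1 (if i.val ≤ q then q + 1 else q) := by
  have hev : ¬ Odd (2 * q + 1 + 1) := by rintro ⟨r, hr⟩; omega
  have := j.isLt
  simp only [carouselRel, hev, if_false, oddCarousel_iff, Fin.val_sub_eq_ite, Fin.le_def,
    Fin.val_castSucc, mem_Icc]
  split_ifs <;> omega

def middle (h : ℕ) : Fin (2 * h + 1) := ⟨h, by omega⟩

lemma oddCarousel_middle_right_iff {h : ℕ} (x : Fin (2 * h + 1)) :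
    oddCarousel (2 * h + 1) x (middle h) ↔ x < middle h := by
  have := x.isLt
  simp only [oddCarousel_iff, Fin.val_sub_eq_ite, middle, Fin.le_def, Fin.lt_def, mem_Icc]
  split_ifs <;> omega

lemma oddCarousel_middle_left_iff {h : ℕ} (x : Fin (2 * h + 1)) :
    oddCarousel (2 * h + 1) (middle h) x ↔ middle h < x := by
  have := x.isLt
  simp only [oddCarousel_iff, Fin.val_sub_eq_ite, middle, Fin.le_def, Fin.lt_def, mem_Icc]
  split_ifs <;> omega

section OnMiddle

variable {h : ℕ}

lemma oddCarousel_on_right_iff_of_middle {m : ℕ} {f : Fin m → Fin (2 * h + 1)} {b : Fin m}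
    (hf : StrictMono f) (hfb : f b = middle h) (i : Fin m) :
    (oddCarousel _ on f) i b ↔ i < b := by
  rw [onFun, hfb, oddCarousel_middle_right_iff, ← hfb, hf.lt_iff_lt]

lemma outDeg_oddCarousel_on_middle {m : ℕ} {f : Fin m → Fin (2 * h + 1)} {b : Fin m}
    (hf : StrictMono f) (hfb : f b = middle h) :
    outDeg (oddCarousel _ on f) b = m - 1 - b := by
  have hgt_b : ∀ j, middle h < f j ↔ b < j := fun j => hfb ▸ hf.lt_iff_lt
  simp only [outDeg, onFun, hfb, oddCarousel_middle_left_iff, hgt_b, filter_lt_eq_Ioi,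
    Fin.card_Ioi]

variable {q : ℕ} {f : Fin (2 * q + 1 + 1) → Fin (2 * h + 1)} {b : Fin (2 * q + 1 + 1)}

lemma middle_index_mem_Icc (hf : StrictMono f) (hfb : f b = middle h)
    (hdeg : ∀ i, i ≠ b → outDeg (oddCarousel _ on f) i = q + if i < b then 1 else 0) :
    b.val ∈ Icc q (q + 1) := by
  have hround := oddCarousel_on_iff hf
  rw [mem_Icc]
  constructor
  · rcases eq_or_ne b (Fin.last _) with hbl | hbl
    · rw [hbl, Fin.val_last]; omega
    have hbl' : b < Fin.last _ := Fin.lt_last_iff_ne_last.2 hbl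
    have := mt (hround (Fin.last _) b).2
      (by rw [oddCarousel_on_right_iff_of_middle hf hfb]; exact hbl'.asymm)
    rw [hdeg _ hbl'.ne', if_neg hbl'.asymm, add_zero, mem_Icc, Fin.val_sub_eq_ite,
      if_neg (not_le.2 hbl'), Fin.val_last] at this
    omega
  · rcases eq_or_ne b 0 with hb0 | hb0
    · simp [hb0]
    have h0b : (0 : Fin _) < b := Fin.pos_iff_ne_zero.2 hb0
    have h0_to_b := (oddCarousel_on_right_iff_of_middle hf hfb 0).2 h0b
    have := (mem_Icc.1 ((hround 0 b).1 h0_to_b)).2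
    rwa [hdeg 0 h0b.ne, if_pos h0b, sub_zero] at this

lemma outDeg_oddCarousel_on_eq (hf : StrictMono f) (hfb : f b = middle h)
    (hdeg : ∀ i, i ≠ b → outDeg (oddCarousel _ on f) i = q + if i < b then 1 else 0)
    (i : Fin (2 * q + 1 + 1)) :
    outDeg (oddCarousel _ on f) i = if i.val ≤ q then q + 1 else q := by
  have hb := mem_Icc.1 (middle_index_mem_Icc hf hfb hdeg)
  rcases eq_or_ne i b with rfl | hib
  · rw [outDeg_oddCarousel_on_middle hf hfb]; split_ifs <;> omega
  · rw [hdeg i hib]; split_ifs <;> omega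

end OnMiddle

theorem inducedIso_insert_middle {h q : ℕ} (X : Finset (Fin (2 * h + 1)))
    (hX : #X = 2 * q + 1) (hmid : middle h ∉ X)
    (hreg : ∀ x ∈ X, #(X.filter (oddCarousel (2 * h + 1) x)) = q) :
    InducedIso (oddCarousel (2 * h + 1)) (insert (middle h) X)
      (carouselRel (2 * q + 1 + 1)) := by
  set T := insert (middle h) X
  have hT : #T = 2 * q + 1 + 1 := by rw [card_insert_of_notMem hmid, hX]
  set g := T.orderIsoOfFin hT
  set f : Fin (2 * q + 1 + 1) → Fin (2 * h + 1) := fun i => g i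
  have hf : StrictMono f := fun a c hac => g.strictMono hac
  set b := g.symm ⟨middle h, mem_insert_self _ _⟩
  have hfb : f b = middle h := by simp [f, b]
  have hdeg_X : ∀ i, i ≠ b → outDeg (oddCarousel _ on f) i = q + if i < b then 1 else 0 := by
    intro i hib
    have hiX : f i ∈ X :=
      (mem_insert.1 (g i).2).resolve_left fun hi => hib (hf.injective (hi.trans hfb.symm))
    have hlt : f i < middle h ↔ i < b := hfb ▸ hf.lt_iff_lt
    rw [outDeg, card_filter_orderIsoOfFin T hT (oddCarousel _ (f i)), filter_insert,
      oddCarousel_middle_right_iff, hlt]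
    split_ifs
    · rw [card_insert_of_notMem fun hm => hmid (mem_filter.1 hm).1, hreg _ hiX]
    · rw [hreg _ hiX, add_zero]
  refine ⟨g.toEquiv.symm, fun x y => ?_⟩
  obtain ⟨i, rfl⟩ := g.toEquiv.surjective x
  obtain ⟨j, rfl⟩ := g.toEquiv.surjective y
  rw [Equiv.symm_apply_apply, Equiv.symm_apply_apply, carouselRel_iff,
    ← outDeg_oddCarousel_on_eq hf hfb hdeg_X]
  exact oddCarousel_on_iff hf i j

theorem stmt19_general (k n : ℕ) (hk : Odd k) (hn : Odd n)
    (X : Finset (Fin n)) (hX : X.card = k)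
    (hiso : InducedIso (oddCarousel n) X (oddCarousel k)) :
    ∀ v : Fin n, v ∉ X →
      InducedIso (oddCarousel n) (insert v X) (carouselRel (k + 1)) := by
  intro v hv
  obtain ⟨q, rfl⟩ := hk
  obtain ⟨h, rfl⟩ := hn
  let σ := Equiv.addRight (middle h - v)
  have hσ : ∀ a b, oddCarousel _ (σ a) (σ b) ↔ oddCarousel _ a b :=
    fun a b => oddCarousel_add_right_iff a b _
  have hσv : σ v = middle h := add_sub_cancel v (middle h)
  rw [← inducedIso_map_iff σ hσ] at hiso ⊢
  rw [map_insert, Equiv.coe_toEmbedding, hσv]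
  refine inducedIso_insert_middle _ (by rw [card_map, hX]) ?_
    fun x hx => hiso.card_filter_eq (outDeg_oddCarousel q) hx
  rwa [← hσv, mem_map_equiv, Equiv.symm_apply_apply]

theorem stmt19 (k n : ℕ) (hk : Odd k) (hk5 : 5 ≤ k) (hn : Odd n) (hkn : k < n)
    (X : Finset (Fin n)) (hX : X.card = k)
    (hiso : InducedIso (oddCarousel n) X (oddCarousel k)) :
    ∀ v : Fin n, v ∉ X →
      InducedIso (oddCarousel n) (insert v X) (carouselRel (k + 1)) :=
  stmt19_general k n hk hn X hX hiso
end
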